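/- arXiv:1610.02276 — 4 statements merged into one kernel-verified Lean document; each statement's English description precedes it below -/
import Mathlib

section
/- Let Y₁,…,Y_ℓ be random variables such that Y_i is conditionally independent of all Y_j (j < i, j ∉ 𝒩_i) given Y_{𝒩_i}, where 𝒩_i = {i−1, ĩ} with ĩ the most recent earlier index of the same type. If additionally I(Y_i; Y_ĩ | Y_{i−1}, Y_j) > 0 for all j < i with j ∉ 𝒩_i, then I(Y_i; Y_{i−1}, Y_j) < I(Y_i; Y_{𝒩_i}) for all such j. -/
open Finset Real

/-- Shannon entropy of the discrete random variable `f` on a finite probability space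
with pmf `μ`. -/
noncomputable def pEnt {Ω α : Type*} [Fintype Ω] [Fintype α] [DecidableEq α]
    (μ : Ω → ℝ) (f : Ω → α) : ℝ :=
  - ∑ a, (∑ ω ∈ Finset.univ.filter (fun ω => f ω = a), μ ω) *
      Real.log (∑ ω ∈ Finset.univ.filter (fun ω => f ω = a), μ ω)

/-- Mutual information `I(f; g)`. -/
noncomputable def pMI {Ω α β : Type*} [Fintype Ω] [Fintype α] [DecidableEq α]
    [Fintype β] [DecidableEq β] (μ : Ω → ℝ) (f : Ω → α) (g : Ω → β) : ℝ :=
  pEnt μ f + pEnt μ g - pEnt μ (fun ω => (f ω, g ω))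

/-- Conditional mutual information `I(f; g | h)`. -/
noncomputable def pCMI {Ω α β γ : Type*} [Fintype Ω] [Fintype α] [DecidableEq α]
    [Fintype β] [DecidableEq β] [Fintype γ] [DecidableEq γ]
    (μ : Ω → ℝ) (f : Ω → α) (g : Ω → β) (h : Ω → γ) : ℝ :=
  pMI μ f (fun ω => (g ω, h ω)) - pMI μ f h

/-! Both sides of the inequality arise from the chain rule applied to
`I(Y i; Y (i-1), Y it, Y j)` in the two possible orders: conditioning on `Y (i-1), Y it` leaves the
term `I(Y i; Y j | Y (i-1), Y it) = 0`, while conditioning on `Y (i-1), Y j` leaves the positive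
term `I(Y i; Y it | Y (i-1), Y j)`. Relabelling the joint variable is harmless because entropy is
invariant under injective maps. -/

lemma pEnt_comp_of_injective {Ω α β : Type*} [Fintype Ω] [Fintype α] [DecidableEq α]
    [Fintype β] [DecidableEq β] (μ : Ω → ℝ) (g : Ω → α) {e : α → β}
    (he : Function.Injective e) :
    pEnt μ (fun ω => e (g ω)) = pEnt μ g := by
  unfold pEnt
  congr 1
  symm
  refine Fintype.sum_of_injective e he _ _ (fun b hb => ?_) (fun a => ?_)
  · have hfiber : univ.filter (fun ω => e (g ω) = b) = ∅ :=
      filter_eq_empty_iff.mpr fun ω _ hω => hb ⟨g ω, hω⟩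
    simp [hfiber]
  · simp only [he.eq_iff]

lemma pMI_comp_right_of_injective {Ω α β γ : Type*} [Fintype Ω] [Fintype α] [DecidableEq α]
    [Fintype β] [DecidableEq β] [Fintype γ] [DecidableEq γ]
    (μ : Ω → ℝ) (f : Ω → α) (g : Ω → β) {e : β → γ} (he : Function.Injective e) :
    pMI μ f (fun ω => e (g ω)) = pMI μ f g := by
  unfold pMI
  have hpair : pEnt μ (fun ω => (f ω, e (g ω))) = pEnt μ (fun ω => (f ω, g ω)) :=
    pEnt_comp_of_injective μ (fun ω => (f ω, g ω)) (e := Prod.map id e)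
      (Function.injective_id.prodMap he)
  rw [pEnt_comp_of_injective μ g he, hpair]

lemma pMI_pair_eq_add_pCMI {Ω α β γ : Type*} [Fintype Ω] [Fintype α] [DecidableEq α]
    [Fintype β] [DecidableEq β] [Fintype γ] [DecidableEq γ]
    (μ : Ω → ℝ) (f : Ω → α) (g : Ω → β) (h : Ω → γ) :
    pMI μ f (fun ω => (g ω, h ω)) = pMI μ f h + pCMI μ f g h := by
  rw [pCMI, add_sub_cancel]

lemma pMI_triple_reverse {Ω α β γ δ : Type*} [Fintype Ω] [Fintype α] [DecidableEq α]
    [Fintype β] [DecidableEq β] [Fintype γ] [DecidableEq γ] [Fintype δ] [DecidableEq δ]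
    (μ : Ω → ℝ) (f : Ω → α) (a : Ω → β) (b : Ω → γ) (c : Ω → δ) :
    pMI μ f (fun ω => (a ω, (b ω, c ω))) = pMI μ f (fun ω => (c ω, (b ω, a ω))) := by
  have hrev : Function.Injective fun p : δ × γ × β => (p.2.2, (p.2.1, p.1)) := by
    rintro ⟨c₁, b₁, a₁⟩ ⟨c₂, b₂, a₂⟩ h
    simp only [Prod.mk.injEq] at h
    obtain ⟨rfl, rfl, rfl⟩ := h
    rfl
  exact pMI_comp_right_of_injective μ f (fun ω => (c ω, (b ω, a ω)))
    (e := fun p => (p.2.2, (p.2.1, p.1))) hrev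

theorem stmt8_general {Ω 𝒴 : Type*} [Fintype Ω] [Fintype 𝒴] [DecidableEq 𝒴]
    (μ : Ω → ℝ) (Y : ℕ → Ω → 𝒴) (i it : ℕ)
    (hci : ∀ j, j < i → j ≠ i - 1 → j ≠ it →
      pCMI μ (Y i) (Y j) (fun ω => (Y (i-1) ω, Y it ω)) = 0)
    (hres : ∀ j, j < i → j ≠ i - 1 → j ≠ it →
      0 < pCMI μ (Y i) (Y it) (fun ω => (Y (i-1) ω, Y j ω))) :
    ∀ j, j < i → j ≠ i - 1 → j ≠ it →
      pMI μ (Y i) (fun ω => (Y (i-1) ω, Y j ω)) <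
        pMI μ (Y i) (fun ω => (Y (i-1) ω, Y it ω)) := by
  intro j hj hj1 hjt
  calc pMI μ (Y i) (fun ω => (Y (i-1) ω, Y j ω))
      < pMI μ (Y i) (fun ω => (Y (i-1) ω, Y j ω))
          + pCMI μ (Y i) (Y it) (fun ω => (Y (i-1) ω, Y j ω)) :=
        lt_add_of_pos_right _ (hres j hj hj1 hjt)
    _ = pMI μ (Y i) (fun ω => (Y it ω, (Y (i-1) ω, Y j ω))) :=
        (pMI_pair_eq_add_pCMI μ (Y i) (Y it) _).symm
    _ = pMI μ (Y i) (fun ω => (Y j ω, (Y (i-1) ω, Y it ω))) :=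
        pMI_triple_reverse μ (Y i) (Y it) (Y (i-1)) (Y j)
    _ = pMI μ (Y i) (fun ω => (Y (i-1) ω, Y it ω)) := by
        rw [pMI_pair_eq_add_pCMI, hci j hj hj1 hjt, add_zero]

/-- If `Y i` is conditionally independent of each `Y j` (`j < i`,
`j ∉ 𝒩 i = {i−1, it}`) given `Y (i−1), Y it` — expressed as
`I(Y i; Y j | Y (i−1), Y it) = 0` — where `it` is the most recent earlier index of the
same type, and if `I(Y i; Y it | Y (i−1), Y j) > 0` for all such `j`, then
`I(Y i; Y (i−1), Y j) < I(Y i; Y (i−1), Y it)` for all such `j`. -/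
theorem stmt8 {Ω 𝒴 : Type*} [Fintype Ω] [Fintype 𝒴] [DecidableEq 𝒴]
    (μ : Ω → ℝ) (hμ : ∀ ω, 0 ≤ μ ω) (hμsum : ∑ ω, μ ω = 1)
    (Y : ℕ → Ω → 𝒴) (T : ℕ → ℕ) (i it : ℕ) (hi : 1 ≤ i)
    (hit : it < i ∧ T it = T i ∧ ∀ j, it < j → j < i → T j ≠ T i)
    (hci : ∀ j, j < i → j ≠ i - 1 → j ≠ it →
      pCMI μ (Y i) (Y j) (fun ω => (Y (i-1) ω, Y it ω)) = 0)
    (hres : ∀ j, j < i → j ≠ i - 1 → j ≠ it →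
      0 < pCMI μ (Y i) (Y it) (fun ω => (Y (i-1) ω, Y j ω))) :
    ∀ j, j < i → j ≠ i - 1 → j ≠ it →
      pMI μ (Y i) (fun ω => (Y (i-1) ω, Y j ω)) <
        pMI μ (Y i) (fun ω => (Y (i-1) ω, Y it ω)) :=
  stmt8_general μ Y i it hci hres
end

section
/- For a uniformly random permutation of a multiset of ℓ objects with K_t ≥ 1 objects of type t and K_{t'} ≥ 1 objects of type t' (t ≠ t'), the probability that the last occurrence of type t immediately precedes the first occurrence of type t' is at most 1/ℓ. More precisely this probability equals (1/ℓ)·K_t!·K_{t'}!/(K_t+K_{t'}−1)! ≤ 1/ℓ. -/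
/-!
Let `T`, `T'` be the objects of types `t`, `t'`, and record a permutation `σ` by their
position sets `A = σ⁻¹ T` and `B = σ⁻¹ T'`. Each pair of disjoint sets of sizes `a = |T|`, `b = |T'|` comes from exactly
`a! b! (ℓ - a - b)!` permutations, so it suffices to count the pairs with
`max A + 1 = min B`. Splitting by `k = max A` there are
`∑ₖ C(k, a - 1) C(ℓ - 2 - k, b - 1) = C(ℓ - 1, a + b - 1)` of them, and
`C(ℓ - 1, a + b - 1) a! b! (ℓ - a - b)! / ℓ! = a! b! / (ℓ (a + b - 1)!)`.
The bound is `a! b! ≤ (a + b - 1)!`, i.e. `C(a + b - 1, b - 1) ≥ b`.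
-/

open Finset Equiv
open scoped Nat

theorem Equiv.Perm.card_filter_comp_eq {α ι : Type*} [Fintype α] [DecidableEq α] [Fintype ι]
    [DecidableEq ι] {f g : α → ι} (h : ∀ i, #{a | g a = i} = #{a | f a = i}) :
    #{σ : Perm α | f ∘ σ = g} = ∏ i, (#{a | f a = i})! := by
  let ρ : Perm α := ofFiberEquiv (f := g) (g := f) fun i =>
    Fintype.equivOfCardEq (by simpa only [Fintype.card_subtype] using h i)
  have hρ : f ∘ ρ = g := funext (ofFiberEquiv_map _)
  -- the solutions form a right coset of the stabiliser of `f`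
  calc #{σ : Perm α | f ∘ σ = g} = #{σ : Perm α | f ∘ σ = f} := by
        refine card_equiv (Equiv.mulRight ρ⁻¹) fun σ => ?_
        simp only [mem_filter, mem_univ, true_and, coe_mulRight, Perm.coe_mul, Perm.inv_def,
          ← hρ]
        rw [← Function.comp_assoc, comp_symm_eq]
    _ = ∏ i, (#{a | f a = i})! := by
        simp only [← Fintype.card_subtype, DomMulAct.stabilizer_card]

section

variable {α : Type*} [DecidableEq α] {A B T T' : Finset α}

def tricolor (A B : Finset α) (x : α) : Fin 3 :=
  if x ∈ A then 0 else if x ∈ B then 1 else 2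

lemma tricolor_eq_zero_iff {x : α} : tricolor A B x = 0 ↔ x ∈ A := by
  unfold tricolor; split_ifs <;> simp_all

lemma tricolor_eq_one_iff (h : Disjoint A B) {x : α} : tricolor A B x = 1 ↔ x ∈ B := by
  unfold tricolor; split_ifs <;> simp_all [disjoint_left]

lemma tricolor_comp_eq_iff (hT : Disjoint T T') (hA : Disjoint A B) (σ : Perm α) :
    tricolor T T' ∘ σ = tricolor A B ↔
      T.map σ.symm.toEmbedding = A ∧ T'.map σ.symm.toEmbedding = B := by
  constructor
  · intro h
    constructor <;> ext x <;> simp only [mem_map_equiv, symm_symm]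
    · rw [← tricolor_eq_zero_iff (B := T'), ← tricolor_eq_zero_iff (B := B), ← congrFun h x]
      rfl
    · rw [← tricolor_eq_one_iff hT, ← tricolor_eq_one_iff hA, ← congrFun h x]; rfl
  · rintro ⟨rfl, rfl⟩
    funext x
    simp [tricolor, mem_map_equiv]

variable [Fintype α]

lemma card_filter_tricolor_eq (h : Disjoint A B) (i : Fin 3) :
    #{x | tricolor A B x = i} = ![#A, #B, Fintype.card α - (#A + #B)] i := by
  fin_cases i
  · simp [tricolor_eq_zero_iff]
  · simp [tricolor_eq_one_iff h]
  · have (x : α) : tricolor A B x = 2 ↔ x ∈ (A ∪ B)ᶜ := by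
      unfold tricolor; split_ifs <;> simp_all
    simp only [Fin.reduceFinMk, this, filter_mem_eq_inter, univ_inter, card_compl,
      card_union_of_disjoint h, Matrix.cons_val]

theorem card_perm_map_symm_eq (hT : Disjoint T T') (hA : Disjoint A B) (hAT : #A = #T)
    (hBT' : #B = #T') :
    #{σ : Perm α | T.map σ.symm.toEmbedding = A ∧ T'.map σ.symm.toEmbedding = B}
      = (#T)! * (#T')! * (Fintype.card α - (#T + #T'))! := by
  simp_rw [← tricolor_comp_eq_iff hT hA]
  rw [Perm.card_filter_comp_eq fun i => by
    rw [card_filter_tricolor_eq hA, card_filter_tricolor_eq hT, hAT, hBT']]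
  simp [Fin.prod_univ_three, card_filter_tricolor_eq hT]

theorem card_perm_filter_map_symm (hT : Disjoint T T') (P : Finset α × Finset α → Prop)
    [DecidablePred P] :
    #{σ : Perm α | P (T.map σ.symm.toEmbedding, T'.map σ.symm.toEmbedding)}
      = #{p ∈ powersetCard #T univ ×ˢ powersetCard #T' univ | Disjoint p.1 p.2 ∧ P p}
          * ((#T)! * (#T')! * (Fintype.card α - (#T + #T'))!) := by
  let positions (σ : Perm α) : Finset α × Finset α :=
    (T.map σ.symm.toEmbedding, T'.map σ.symm.toEmbedding)
  rw [card_eq_sum_card_fiberwise (f := positions), ← smul_eq_mul, ← sum_const]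
  · refine sum_congr rfl fun p hp => ?_
    simp only [mem_filter, mem_product, mem_powersetCard] at hp
    rw [filter_filter, ← card_perm_map_symm_eq hT hp.2.1 hp.1.1.2 hp.1.2.2]
    congr 1
    refine filter_congr fun σ _ => ⟨fun h => Prod.ext_iff.1 h.2, fun h => ?_⟩
    obtain rfl : positions σ = p := Prod.ext h.1 h.2
    exact ⟨hp.2.2, rfl⟩
  · intro σ hσ
    simp only [coe_filter, mem_univ, true_and, Set.mem_ofPred_eq] at hσ
    simp [positions, hσ, disjoint_map, hT]

end

theorem Nat.sum_range_choose_mul_choose_sub (a b n : ℕ) :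
    ∑ k ∈ range n, k.choose a * (n - 1 - k).choose b = n.choose (a + b + 1) := by
  induction n generalizing b with
  | zero => simp
  | succ n ih =>
    rw [sum_range_succ]
    cases b with
    | zero =>
      have := ih 0
      simp only [choose_zero_right, mul_one, add_zero] at this ⊢
      rw [this, choose_succ_succ', add_comm]
    | succ b =>
      have pascal : ∀ k ∈ range n, k.choose a * (n + 1 - 1 - k).choose (b + 1)
          = k.choose a * (n - 1 - k).choose b + k.choose a * (n - 1 - k).choose (b + 1) := by
        intro k hk
        rw [show n + 1 - 1 - k = n - 1 - k + 1 by grind, choose_succ_succ', mul_add]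
      rw [sum_congr rfl pascal, sum_add_distrib, ih, ih,
        show a + (b + 1) + 1 = a + b + 1 + 1 by ring, choose_succ_succ' n]
      simp

theorem Finset.card_filter_mem_powersetCard_succ_insert {α : Type*} [DecidableEq α]
    {s : Finset α} {x : α} (hx : x ∉ s) (a : ℕ) :
    #{A ∈ powersetCard (a + 1) (insert x s) | x ∈ A} = (#s).choose a := by
  have hxA (A : Finset α) (hA : A ⊆ s) : x ∉ A := fun h => hx (hA h)
  rw [powersetCard_succ_insert hx, filter_union,
    filter_false_of_mem fun A hA => hxA A (mem_powersetCard.1 hA).1, empty_union,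
    filter_true_of_mem fun A hA => by
      obtain ⟨B, -, rfl⟩ := mem_image.1 hA; exact mem_insert_self x B,
    card_image_of_injOn, card_powersetCard]
  intro A hA B hB h
  rw [← erase_insert (hxA A (mem_powersetCard.1 hA).1),
    ← erase_insert (hxA B (mem_powersetCard.1 hB).1)]
  exact congrArg (·.erase x) h

def MaxSuccEqMin {ℓ : ℕ} (A B : Finset (Fin ℓ)) : Prop :=
  ∃ k k' : Fin ℓ, (k : ℕ) + 1 = k' ∧ k ∈ A ∧ k' ∈ B ∧
    (∀ j, k < j → j ∉ A) ∧ (∀ j, j < k' → j ∉ B)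

instance {ℓ : ℕ} : DecidableRel (MaxSuccEqMin (ℓ := ℓ)) := fun A B => by
  unfold MaxSuccEqMin; infer_instance

namespace MaxSuccEqMin

variable {n : ℕ} {A B : Finset (Fin (n + 1))}

lemma disjoint (h : MaxSuccEqMin A B) : Disjoint A B := by
  obtain ⟨k, k', hk, -, -, hA, hB⟩ := h
  refine disjoint_left.2 fun j hjA hjB => ?_
  rcases lt_or_ge k j with hkj | hjk
  · exact hA j hkj hjA
  · exact hB j (by omega) hjB

lemma iff_exists : MaxSuccEqMin A B ↔
    ∃ i : Fin n, (A ⊆ Iic i.castSucc ∧ i.castSucc ∈ A) ∧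
      (B ⊆ Ici i.succ ∧ i.succ ∈ B) := by
  constructor
  · rintro ⟨k, k', hk, hkA, hk'B, hA, hB⟩
    refine ⟨⟨k, by omega⟩, ?_⟩
    rw [show (⟨k, _⟩ : Fin n).castSucc = k from rfl, show (⟨k, _⟩ : Fin n).succ = k' from
      Fin.ext hk]
    exact ⟨⟨fun j hj => mem_Iic.2 (not_lt.1 fun h => hA j h hj), hkA⟩,
      fun j hj => mem_Ici.2 (not_lt.1 fun h => hB j h hj), hk'B⟩
  · rintro ⟨i, ⟨hA, hiA⟩, hB, hiB⟩
    exact ⟨i.castSucc, i.succ, by simp, hiA, hiB,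
      fun j hj hjA => (mem_Iic.1 (hA hjA)).not_gt hj,
      fun j hj hjB => (mem_Ici.1 (hB hjB)).not_gt hj⟩

end MaxSuccEqMin

theorem card_filter_maxSuccEqMin (n a b : ℕ) :
    #{p ∈ powersetCard (a + 1) (univ : Finset (Fin (n + 1))) ×ˢ
        powersetCard (b + 1) (univ : Finset (Fin (n + 1))) | MaxSuccEqMin p.1 p.2}
      = n.choose (a + b + 1) := by
  let endingAt (i : Fin n) := {A ∈ powersetCard (a + 1) (Iic i.castSucc) | i.castSucc ∈ A}
  let startingAt (i : Fin n) := {B ∈ powersetCard (b + 1) (Ici i.succ) | i.succ ∈ B}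
  have hdisj : ((univ : Finset (Fin n)) : Set (Fin n)).PairwiseDisjoint
      fun i => endingAt i ×ˢ startingAt i := by
    intro i _ j _ hij
    refine disjoint_product.2 (Or.inl (disjoint_left.2 fun A hAi hAj => hij ?_))
    simp only [mem_filter, mem_powersetCard, endingAt] at hAi hAj
    exact Fin.castSucc_injective _
      (le_antisymm (mem_Iic.1 (hAj.1.1 hAi.2)) (mem_Iic.1 (hAi.1.1 hAj.2)))
  have hend (i : Fin n) : #(endingAt i) = (i : ℕ).choose a := by
    rw [← Fin.val_castSucc i, ← Fin.card_Iio, ← card_filter_mem_powersetCard_succ_insert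
      notMem_Iio_self, Iio_insert]
  have hstart (i : Fin n) : #(startingAt i) = (n - 1 - i).choose b := by
    rw [show n - 1 - i = n + 1 - 1 - i.succ by simp; omega, ← Fin.card_Ioi,
      ← card_filter_mem_powersetCard_succ_insert notMem_Ioi_self, Ioi_insert]
  calc _ = #((univ : Finset (Fin n)).biUnion fun i => endingAt i ×ˢ startingAt i) := by
        congr 1
        ext ⟨A, B⟩
        simp only [mem_filter, mem_product, mem_powersetCard, subset_univ, true_and,
          MaxSuccEqMin.iff_exists, mem_biUnion, mem_univ, endingAt, startingAt]
        grind
    _ = ∑ k ∈ range n, k.choose a * (n - 1 - k).choose b := by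
        rw [card_biUnion hdisj,
          ← Fin.sum_univ_eq_sum_range fun k => k.choose a * (n - 1 - k).choose b]
        simp only [card_product, hend, hstart]
    _ = n.choose (a + b + 1) := Nat.sum_range_choose_mul_choose_sub a b n

theorem card_perm_maxSuccEqMin_mul {n : ℕ} {T T' : Finset (Fin (n + 1))} (h : Disjoint T T')
    (hT : T.Nonempty) (hT' : T'.Nonempty) :
    #{σ : Perm (Fin (n + 1)) |
        MaxSuccEqMin (T.map σ.symm.toEmbedding) (T'.map σ.symm.toEmbedding)}
      * ((#T + #T' - 1)! * (n + 1)) = (#T)! * (#T')! * (n + 1)! := by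
  have hle : #T + #T' ≤ n + 1 := by
    simpa only [card_union_of_disjoint h, Fintype.card_fin] using card_le_univ (T ∪ T')
  obtain ⟨a, ha⟩ := Nat.exists_eq_succ_of_ne_zero hT.card_ne_zero
  obtain ⟨b, hb⟩ := Nat.exists_eq_succ_of_ne_zero hT'.card_ne_zero
  rw [card_perm_filter_map_symm h fun p => MaxSuccEqMin p.1 p.2,
    filter_congr fun p _ => and_iff_right_of_imp MaxSuccEqMin.disjoint, ha, hb,
    card_filter_maxSuccEqMin, Fintype.card_fin, Nat.factorial_succ n,
    ← Nat.choose_mul_factorial_mul_factorial (show a + b + 1 ≤ n by omega),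
    show n + 1 - (a + 1 + (b + 1)) = n - (a + b + 1) by omega,
    show a + 1 + (b + 1) - 1 = a + b + 1 by omega]
  ring

theorem Nat.factorial_mul_factorial_le_factorial_add_sub_one {a b : ℕ} (ha : 1 ≤ a)
    (hb : 1 ≤ b) : a ! * b ! ≤ (a + b - 1)! := by
  obtain ⟨b, rfl⟩ := Nat.exists_eq_add_of_le' hb
  have hchoose : b + 1 ≤ (a + b).choose b :=
    (choose_succ_self_right b).symm.le.trans (choose_le_choose b (by omega))
  calc a ! * (b + 1)! = (b + 1) * a ! * b ! := by rw [factorial_succ]; ring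
    _ ≤ (a + b).choose b * a ! * b ! := by gcongr
    _ = (a + b + 1 - 1)! := by rw [add_choose_mul_factorial_mul_factorial]; rfl

/-- For a uniformly random permutation of a multiset of `ℓ` objects with
`Kt ≥ 1` objects of type `t` and `Kt' ≥ 1` objects of type `t'` (`t ≠ t'`), the
probability that the last occurrence of type `t` immediately precedes the first
occurrence of type `t'` equals `(1/ℓ) · Kt! · Kt'! / (Kt + Kt' − 1)! ≤ 1/ℓ`. -/
theorem stmt9 (ℓ τ : ℕ) (hℓ : 1 ≤ ℓ) (c : Fin ℓ → Fin τ) (t t' : Fin τ) (htt : t ≠ t')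
    (Kt Kt' : ℕ)
    (hKt : Kt = (Finset.univ.filter (fun i => c i = t)).card) (hKt1 : 1 ≤ Kt)
    (hKt' : Kt' = (Finset.univ.filter (fun i => c i = t')).card) (hKt'1 : 1 ≤ Kt') :
    ∀ E : Finset (Equiv.Perm (Fin ℓ)),
      E = Finset.univ.filter (fun σ : Equiv.Perm (Fin ℓ) =>
        ∃ k k' : Fin ℓ, (k : ℕ) + 1 = (k' : ℕ) ∧ c (σ k) = t ∧ c (σ k') = t' ∧
          (∀ j, k < j → c (σ j) ≠ t) ∧ (∀ j, j < k' → c (σ j) ≠ t')) →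
      (E.card : ℝ) / (Fintype.card (Equiv.Perm (Fin ℓ)) : ℝ)
          = (1 / ℓ) * (Nat.factorial Kt * Nat.factorial Kt' : ℝ)
              / (Nat.factorial (Kt + Kt' - 1) : ℝ) ∧
      (E.card : ℝ) / (Fintype.card (Equiv.Perm (Fin ℓ)) : ℝ) ≤ 1 / ℓ := by
  intro E hE
  obtain ⟨n, rfl⟩ : ∃ n, ℓ = n + 1 := ⟨ℓ - 1, by omega⟩
  set T : Finset (Fin (n + 1)) := {i | c i = t}
  set T' : Finset (Fin (n + 1)) := {i | c i = t'}
  have hdisj : Disjoint T T' := disjoint_filter.2 fun i _ hi hi' => htt (hi.symm.trans hi')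
  have hcount := card_perm_maxSuccEqMin_mul hdisj (card_pos.1 (hKt ▸ hKt1))
    (card_pos.1 (hKt' ▸ hKt'1))
  have hE' : E = ({σ | MaxSuccEqMin (T.map σ.symm.toEmbedding) (T'.map σ.symm.toEmbedding)} :
      Finset (Perm (Fin (n + 1)))) := by
    rw [hE]; ext σ; simp [MaxSuccEqMin, T, T']
  rw [← hE', ← hKt, ← hKt'] at hcount
  have hprob : (#E : ℝ) / (Fintype.card (Perm (Fin (n + 1))) : ℝ)
      = 1 / ((n + 1 : ℕ) : ℝ) * (Kt ! * Kt' ! : ℝ) / ((Kt + Kt' - 1)! : ℝ) := by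
    rw [Fintype.card_perm, Fintype.card_fin, div_eq_div_iff (by positivity) (by positivity)]
    field_simp
    rw [mul_assoc]
    exact_mod_cast hcount
  refine ⟨hprob, hprob ▸ ?_⟩
  rw [mul_div_assoc]
  refine mul_le_of_le_one_right (by positivity) ((div_le_one (by positivity)).2 ?_)
  exact_mod_cast Nat.factorial_mul_factorial_le_factorial_add_sub_one hKt1 hKt'1
end

section
/- For a discrete random variable X on a finite alphabet 𝒳 with distribution P and empirical distribution P̂ from samples, the plug-in entropy estimate satisfies |Ĥ(X) − H(X)| ≤ −2δ(P̂,P)·log(2δ(P̂,P)/|𝒳|), and consequently (using log x < √x for x > 0) |Ĥ(X) − H(X)| ≤ √(2|𝒳|·δ(P̂,P)). -/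
/-!
Write `η = negMulLog`. Since `η` is concave, its increment `q ↦ η (q + t) - η q` is antitone on
`[0, ∞)`; comparing with the extreme positions `q = 0` and `q = 1 - t` bounds `|η a - η b|` by
`η |a - b|` when `|a - b| ≤ 1/2`, the lower end using `η (1 - t) ≤ η t` for `t ≤ 1/2`. Summing
over the alphabet and applying Jensen's inequality to `η` with uniform weights turns
`∑ η |P̂ x - P x|` into `m η (2δ / m) = -2δ log (2δ / m)`. Finally `η x ≤ √x`, because
`log y ≤ y / 2`, which gives the square-root bound.
-/

open Finset Real

namespace Real

lemma log_le_half_self {x : ℝ} (hx : 0 < x) : log x ≤ x / 2 := by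
  have h := log_le_sub_one_of_pos (half_pos hx)
  rw [log_div hx.ne' two_ne_zero] at h
  linarith [log_two_lt_d9]

lemma negMulLog_le_sqrt {x : ℝ} (hx : 0 ≤ x) : negMulLog x ≤ √x := by
  rcases hx.eq_or_lt with rfl | hx
  · simp
  set y := √x
  have hy : 0 < y := sqrt_pos.2 hx
  have hxy : x = y ^ 2 := (sq_sqrt hx.le).symm
  have hlog : log y⁻¹ ≤ y⁻¹ / 2 := log_le_half_self (inv_pos.2 hy)
  calc negMulLog x = 2 * y ^ 2 * log y⁻¹ := by
        rw [negMulLog, hxy, log_inv, log_pow]; push_cast; ring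
    _ ≤ 2 * y ^ 2 * (y⁻¹ / 2) := by gcongr
    _ = y := by field_simp

lemma neg_mul_log_div_le_sqrt_mul {s m : ℝ} (hs : 0 ≤ s) (hm : 0 ≤ m) :
    -s * log (s / m) ≤ √(m * s) := by
  rcases hm.eq_or_lt with rfl | hm
  · simp
  calc -s * log (s / m) = m * negMulLog (s / m) := by rw [negMulLog]; field_simp
    _ ≤ m * √(s / m) := by gcongr; exact negMulLog_le_sqrt (by positivity)
    _ = √(m * s) := by
        rw [← sqrt_sq hm.le, ← sqrt_mul (sq_nonneg m), sqrt_sq hm.le]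
        congr 1; field_simp

lemma antitoneOn_negMulLog_add_sub_negMulLog {t : ℝ} (ht : 0 ≤ t) :
    AntitoneOn (fun q => negMulLog (q + t) - negMulLog q) (Set.Ici 0) := by
  refine antitoneOn_of_hasDerivWithinAt_nonpos (f' := fun q => log q - log (q + t))
    (convex_Ici 0) (by fun_prop) (fun q hq => ?_) (fun q hq => ?_)
  all_goals simp only [interior_Ici, Set.mem_Ioi] at hq ⊢
  · have hshift := (hasDerivAt_negMulLog (by positivity : q + t ≠ 0)).comp_add_const q t
    have h := (hshift.sub (hasDerivAt_negMulLog hq.ne')).hasDerivWithinAt (s := Set.Ioi 0)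
    rwa [show -log (q + t) - 1 - (-log q - 1) = log q - log (q + t) by ring] at h
  · exact sub_nonpos.2 (log_le_log hq (by linarith))

lemma negMulLog_one_sub_le {t : ℝ} (ht0 : 0 ≤ t) (ht : t ≤ 1 / 2) :
    negMulLog (1 - t) ≤ negMulLog t := by
  rcases ht0.eq_or_lt with rfl | ht0
  · simp
  -- tangent line of `log` at `1/2`
  have htangent : log t ≤ 2 * t - 1 - log 2 := by
    have h := log_le_sub_one_of_pos (by positivity : 0 < 2 * t)
    rw [log_mul two_ne_zero ht0.ne'] at h
    linarith
  -- chord of `log` on `[1/2, 1]`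
  have hchord : -(2 * log 2) * t ≤ log (1 - t) := by
    have h := strictConcaveOn_log_Ioi.concaveOn.2 (Set.mem_Ioi.2 (by norm_num : (0 : ℝ) < 1 / 2))
      (Set.mem_Ioi.2 one_pos) (by linarith : (0 : ℝ) ≤ 2 * t) (by linarith : (0 : ℝ) ≤ 1 - 2 * t)
      (by ring)
    have harg : (2 * t) • (1 / 2 : ℝ) + (1 - 2 * t) • (1 : ℝ) = 1 - t := by
      simp only [smul_eq_mul]; ring
    rw [harg] at h
    simp only [smul_eq_mul, one_div, log_inv, log_one, mul_zero, add_zero] at h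
    linarith
  have hlog2 : log 2 < 1 := by linarith [log_two_lt_d9]
  simp only [negMulLog, neg_mul]
  nlinarith [mul_le_mul_of_nonneg_left htangent ht0.le,
    mul_le_mul_of_nonneg_left hchord (by linarith : (0 : ℝ) ≤ 1 - t),
    mul_nonneg (mul_nonneg ht0.le (by linarith : (0 : ℝ) ≤ 1 - log 2))
      (by linarith : (0 : ℝ) ≤ 1 - 2 * t)]

lemma abs_negMulLog_add_sub_negMulLog_le {q t : ℝ} (hq : 0 ≤ q) (ht0 : 0 ≤ t) (ht : t ≤ 1 / 2)
    (hqt : q + t ≤ 1) : |negMulLog (q + t) - negMulLog q| ≤ negMulLog t := by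
  have hanti := antitoneOn_negMulLog_add_sub_negMulLog ht0
  have hupper := hanti Set.self_mem_Ici (Set.mem_Ici.2 hq) hq
  have hlower := hanti (Set.mem_Ici.2 hq) (Set.mem_Ici.2 (by linarith : 0 ≤ 1 - t))
    (by linarith : q ≤ 1 - t)
  simp only [zero_add, negMulLog_zero, sub_zero, sub_add_cancel, negMulLog_one, zero_sub]
    at hupper hlower
  rw [abs_le]
  constructor <;> linarith [negMulLog_one_sub_le ht0 ht]

lemma abs_negMulLog_sub_negMulLog_le {a b : ℝ} (ha0 : 0 ≤ a) (ha1 : a ≤ 1) (hb0 : 0 ≤ b)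
    (hb1 : b ≤ 1) (hab : |a - b| ≤ 1 / 2) : |negMulLog a - negMulLog b| ≤ negMulLog |a - b| := by
  wlog hba : b ≤ a generalizing a b
  · rw [abs_sub_comm, abs_sub_comm a] at *
    exact this hb0 hb1 ha0 ha1 hab (by linarith)
  rw [abs_of_nonneg (sub_nonneg.2 hba)] at hab ⊢
  simpa using abs_negMulLog_add_sub_negMulLog_le hb0 (sub_nonneg.2 hba) hab (by linarith)

lemma sum_negMulLog_le_neg_mul_log_div_card {ι : Type*} (s : Finset ι) {f : ι → ℝ}
    (hf : ∀ i ∈ s, 0 ≤ f i) :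
    ∑ i ∈ s, negMulLog (f i) ≤ -(∑ i ∈ s, f i) * log ((∑ i ∈ s, f i) / #s) := by
  rcases s.eq_empty_or_nonempty with rfl | hs
  · simp
  have hcard : (0 : ℝ) < #s := by exact_mod_cast hs.card_pos
  have hjensen := concaveOn_negMulLog.le_map_sum (t := s) (w := fun _ => (#s : ℝ)⁻¹) (p := f)
    (fun _ _ => by positivity) (by simp [hcard.ne']) hf
  simp only [smul_eq_mul, ← mul_sum] at hjensen
  calc ∑ i ∈ s, negMulLog (f i) = #s * ((#s : ℝ)⁻¹ * ∑ i ∈ s, negMulLog (f i)) := by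
        field_simp
    _ ≤ #s * negMulLog ((#s : ℝ)⁻¹ * ∑ i ∈ s, f i) := by gcongr
    _ = -(∑ i ∈ s, f i) * log ((∑ i ∈ s, f i) / #s) := by
        rw [negMulLog, inv_mul_eq_div]; field_simp

lemma abs_sum_negMulLog_sub_le {ι : Type*} (s : Finset ι) {p q : ι → ℝ}
    (hp0 : ∀ i ∈ s, 0 ≤ p i) (hp1 : ∀ i ∈ s, p i ≤ 1) (hq0 : ∀ i ∈ s, 0 ≤ q i)
    (hq1 : ∀ i ∈ s, q i ≤ 1) (hpq : ∀ i ∈ s, |q i - p i| ≤ 1 / 2) :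
    |∑ i ∈ s, negMulLog (q i) - ∑ i ∈ s, negMulLog (p i)| ≤ ∑ i ∈ s, negMulLog |q i - p i| := by
  rw [← sum_sub_distrib]
  refine (abs_sum_le_sum_abs _ _).trans (sum_le_sum fun i hi => ?_)
  exact abs_negMulLog_sub_negMulLog_le (hq0 i hi) (hq1 i hi) (hp0 i hi) (hp1 i hi) (hpq i hi)

end Real

open Real

theorem stmt17_general (m : ℕ) (P Ph : Fin m → ℝ)
    (hP : ∀ x, 0 ≤ P x) (hPh : ∀ x, 0 ≤ Ph x)
    (hPsum : ∑ x, P x = 1) (hPhsum : ∑ x, Ph x = 1)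
    (hδ : (1/2) * ∑ x, |Ph x - P x| ≤ 1/4) :
    |(-∑ x, Ph x * Real.log (Ph x)) - (-∑ x, P x * Real.log (P x))|
        ≤ -2 * ((1/2) * ∑ x, |Ph x - P x|) *
            Real.log (2 * ((1/2) * ∑ x, |Ph x - P x|) / m) ∧
    |(-∑ x, Ph x * Real.log (Ph x)) - (-∑ x, P x * Real.log (P x))|
        ≤ Real.sqrt (2 * m * ((1/2) * ∑ x, |Ph x - P x|)) := by
  set S := ∑ x, |Ph x - P x|
  have hle_one {f : Fin m → ℝ} (hf : ∀ x, 0 ≤ f x) (hsum : ∑ x, f x = 1) (x : Fin m) : f x ≤ 1 :=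
    hsum ▸ single_le_sum (fun i _ => hf i) (mem_univ x)
  have hdiff (x : Fin m) : |Ph x - P x| ≤ 1 / 2 :=
    (single_le_sum (fun i _ => abs_nonneg (Ph i - P i)) (mem_univ x)).trans (by linarith)
  have hentropy (f : Fin m → ℝ) : -∑ x, f x * log (f x) = ∑ x, negMulLog (f x) := by
    simp [negMulLog, sum_neg_distrib]
  have hbound : |(-∑ x, Ph x * log (Ph x)) - (-∑ x, P x * log (P x))| ≤ -S * log (S / m) := by
    rw [hentropy, hentropy]
    refine (abs_sum_negMulLog_sub_le univ (fun x _ => hP x) (fun x _ => hle_one hP hPsum x)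
      (fun x _ => hPh x) (fun x _ => hle_one hPh hPhsum x) (fun x _ => hdiff x)).trans ?_
    simpa using sum_negMulLog_le_neg_mul_log_div_card univ fun x _ => abs_nonneg (Ph x - P x)
  rw [show 2 * ((1 / 2) * S) = S by ring, show -2 * ((1 / 2) * S) = -S by ring,
    show 2 * (m : ℝ) * ((1 / 2) * S) = m * S by ring]
  exact ⟨hbound, hbound.trans (neg_mul_log_div_le_sqrt_mul (sum_nonneg fun x _ => abs_nonneg _)
    m.cast_nonneg)⟩

/-- For a distribution `P` on a finite alphabet of size `m ≥ 1` and an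
empirical distribution `Ph` with `δ(Ph,P) ≤ 1/4`, the plug-in entropy satisfies
`|Ĥ − H| ≤ −2δ·log(2δ/m)` and consequently `|Ĥ − H| ≤ √(2 m δ)`. -/
theorem stmt17 (m : ℕ) (hm : 1 ≤ m) (P Ph : Fin m → ℝ)
    (hP : ∀ x, 0 ≤ P x) (hPh : ∀ x, 0 ≤ Ph x)
    (hPsum : ∑ x, P x = 1) (hPhsum : ∑ x, Ph x = 1)
    (hδ : (1/2) * ∑ x, |Ph x - P x| ≤ 1/4) :
    |(-∑ x, Ph x * Real.log (Ph x)) - (-∑ x, P x * Real.log (P x))|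
        ≤ -2 * ((1/2) * ∑ x, |Ph x - P x|) *
            Real.log (2 * ((1/2) * ∑ x, |Ph x - P x|) / m) ∧
    |(-∑ x, Ph x * Real.log (Ph x)) - (-∑ x, P x * Real.log (P x))|
        ≤ Real.sqrt (2 * m * ((1/2) * ∑ x, |Ph x - P x|)) :=
  stmt17_general m P Ph hP hPh hPsum hPhsum hδ
end

section
/- The plug-in (maximum likelihood) entropy estimator is negatively biased: E[Ĥ(X)] − H(X) = −E[D(P̂‖P)] ≤ 0, and moreover −log(1 + (|𝒳|−1)/n) ≤ E[Ĥ(X)] − H(X) ≤ 0 for n i.i.d. samples. -/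
/-!
Write `q = P̂` and `w(s) = ∏ᵢ p (sᵢ)`. Since `E[q x] = p x`, averaging the pointwise identity
`H(q) + D(q‖p) = -∑ₓ q x log p x` gives `E[H(q)] - H(p) = -E[D(q‖p)]`, and Gibbs' inequality
makes this `≤ 0`. For the lower bound, Jensen for `log` with weights `q` gives
`D(q‖p) ≤ log ∑ₓ q x² / p x`, and Jensen again with weights `w` moves the expectation inside
the logarithm; the second moment `E[q x²] = (p x + (n - 1) p x²) / n` then evaluates
`E[∑ₓ q x² / p x] ≤ 1 + (|𝒳| - 1) / n`.
-/

open Finset Real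

section Entropy

variable {α : Type*} [Fintype α]

noncomputable def entropy (w : α → ℝ) : ℝ := -∑ x, w x * log (w x)

noncomputable def relEntropy (a b : α → ℝ) : ℝ := ∑ x, a x * log (a x / b x)

variable {w y : α → ℝ}

lemma sum_mul_pos_of_sum_eq_one (hw : ∀ i, 0 ≤ w i) (hw1 : ∑ i, w i = 1)
    (hy : ∀ i, w i ≠ 0 → 0 < y i) : 0 < ∑ i, w i * y i := by
  obtain ⟨i, -, hi⟩ := exists_ne_zero_of_sum_ne_zero (s := univ) (f := w) (by simp [hw1])
  refine sum_pos' (fun j _ => ?_) ⟨i, mem_univ i, mul_pos ((hw i).lt_of_ne' hi) (hy i hi)⟩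
  rcases eq_or_ne (w j) 0 with hj | hj
  · simp [hj]
  · exact mul_nonneg (hw j) (hy j hj).le

lemma sum_mul_log_le_log_sum_mul (hw : ∀ i, 0 ≤ w i) (hw1 : ∑ i, w i = 1)
    (hy : ∀ i, w i ≠ 0 → 0 < y i) : ∑ i, w i * log (y i) ≤ log (∑ i, w i * y i) := by
  have hsupp {f : α → ℝ} (hf : ∀ i, w i = 0 → f i = 0) : ∑ i with w i ≠ 0, f i = ∑ i, f i :=
    sum_filter_of_ne fun i _ hfi hwi => hfi (hf i hwi)
  have := strictConcaveOn_log_Ioi.concaveOn.le_map_sum (t := {i | w i ≠ 0}) (w := w) (p := y)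
    (fun i _ => hw i) (by rw [hsupp (fun _ h => h), hw1])
    (fun i hi => hy i (mem_filter.1 hi).2)
  simp only [smul_eq_mul] at this
  rwa [hsupp (f := fun i => w i * log (y i)) (by simp_all), hsupp (by simp_all)] at this

variable {q p : α → ℝ}

lemma relEntropy_nonneg (hq : ∀ x, 0 ≤ q x) (hq1 : ∑ x, q x = 1) (hp : ∀ x, 0 ≤ p x)
    (hp1 : ∑ x, p x ≤ 1) (hqp : ∀ x, q x ≠ 0 → 0 < p x) : 0 ≤ relEntropy q p := by
  have hpos (x) (hx : q x ≠ 0) : 0 < p x / q x := div_pos (hqp x hx) ((hq x).lt_of_ne' hx)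
  have hle : ∑ x, q x * (p x / q x) ≤ 1 := by
    refine le_trans (sum_le_sum fun x _ => ?_) hp1
    rcases eq_or_ne (q x) 0 with hx | hx
    · simp [hx, hp x]
    · rw [mul_div_cancel₀ _ hx]
  have := (sum_mul_log_le_log_sum_mul hq hq1 hpos).trans
    (log_nonpos (sum_mul_pos_of_sum_eq_one hq hq1 hpos).le hle)
  simp only [relEntropy, ← inv_div (q _), log_inv, mul_neg, sum_neg_distrib] at this ⊢
  linarith

lemma relEntropy_le_log_sum_sq_div (hq : ∀ x, 0 ≤ q x) (hq1 : ∑ x, q x = 1)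
    (hqp : ∀ x, q x ≠ 0 → 0 < p x) : relEntropy q p ≤ log (∑ x, q x ^ 2 / p x) := by
  have hpos (x) (hx : q x ≠ 0) : 0 < q x / p x := div_pos ((hq x).lt_of_ne' hx) (hqp x hx)
  simpa only [relEntropy, sq, mul_div_assoc] using sum_mul_log_le_log_sum_mul hq hq1 hpos

lemma sum_sq_div_pos (hq : ∀ x, 0 ≤ q x) (hq1 : ∑ x, q x = 1)
    (hqp : ∀ x, q x ≠ 0 → 0 < p x) : 0 < ∑ x, q x ^ 2 / p x := by
  have hpos (x) (hx : q x ≠ 0) : 0 < q x / p x := div_pos ((hq x).lt_of_ne' hx) (hqp x hx)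
  simpa only [sq, mul_div_assoc] using sum_mul_pos_of_sum_eq_one hq hq1 hpos

lemma entropy_add_relEntropy (hqp : ∀ x, q x ≠ 0 → p x ≠ 0) :
    entropy q + relEntropy q p = -∑ x, q x * log (p x) := by
  rw [entropy, relEntropy, neg_add_eq_sub, ← sum_sub_distrib, ← sum_neg_distrib]
  refine sum_congr rfl fun x _ => ?_
  rcases eq_or_ne (q x) 0 with hx | hx
  · simp [hx]
  · rw [log_div hx (hqp x hx)]; ring

end Entropy

section IidProduct

variable {ι α : Type*} [Fintype ι] [DecidableEq ι] [Fintype α]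

lemma sum_prod_mul_prod (p : α → ℝ) (g : ι → α → ℝ) :
    ∑ s : ι → α, (∏ i, p (s i)) * ∏ i, g i (s i) = ∏ i, ∑ x, p x * g i x := by
  simp_rw [← prod_mul_distrib]
  exact (Fintype.prod_sum fun i x => p x * g i x).symm

variable {p : α → ℝ} (hp1 : ∑ x, p x = 1)
include hp1

lemma sum_prod_eq_one : ∑ s : ι → α, ∏ i, p (s i) = 1 := by
  simpa [hp1] using sum_prod_mul_prod (ι := ι) p fun _ _ => 1

lemma sum_prod_mul_apply (i : ι) (f : α → ℝ) :
    ∑ s : ι → α, (∏ k, p (s k)) * f (s i) = ∑ x, p x * f x := by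
  have := sum_prod_mul_prod p fun k x => if k = i then f x else 1
  simpa [prod_ite_eq', mul_ite, hp1] using this

lemma sum_prod_mul_apply_mul_apply {i j : ι} (hij : i ≠ j) (f g : α → ℝ) :
    ∑ s : ι → α, (∏ k, p (s k)) * (f (s i) * g (s j))
      = (∑ x, p x * f x) * ∑ x, p x * g x := by
  have := sum_prod_mul_prod p fun k x => (if k = i then f x else 1) * (if k = j then g x else 1)
  have factor (k : ι) : ∑ x, p x * ((if k = i then f x else 1) * (if k = j then g x else 1))
      = (if k = i then ∑ x, p x * f x else 1) * (if k = j then ∑ x, p x * g x else 1) := by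
    by_cases hi : k = i <;> by_cases hj : k = j <;> simp_all
  simpa only [prod_mul_distrib, prod_ite_eq', mem_univ, if_true, factor] using this

end IidProduct

section Empirical

variable {ι α : Type*} [Fintype ι] [DecidableEq α]

noncomputable def empirical (s : ι → α) (x : α) : ℝ := (#{i | s i = x} : ℝ) / Fintype.card ι

lemma empirical_nonneg (s : ι → α) (x : α) : 0 ≤ empirical s x := by
  unfold empirical; positivity

lemma empirical_eq_sum_indicator (s : ι → α) (x : α) :
    empirical s x = (∑ i, if s i = x then 1 else 0) / Fintype.card ι := by
  rw [empirical, natCast_card_filter]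

lemma p_ne_zero_of_empirical_ne_zero {p : α → ℝ} {s : ι → α} (hs : ∏ i, p (s i) ≠ 0) {x : α}
    (hx : empirical s x ≠ 0) : p x ≠ 0 := by
  obtain ⟨i, rfl⟩ : ∃ i, s i = x := by
    by_contra! h
    simp [empirical, h] at hx
  exact prod_ne_zero_iff.1 hs i (mem_univ i)

variable [Fintype α]

lemma sum_empirical [Nonempty ι] (s : ι → α) : ∑ x, empirical s x = 1 := by
  simp only [empirical]
  rw [← sum_div, ← Nat.cast_sum, ← card_eq_sum_card_fiberwise (by simp),
    card_univ, div_self (by positivity)]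

variable [DecidableEq ι] {p : α → ℝ} (hp1 : ∑ x, p x = 1)
include hp1

lemma sum_prod_mul_empirical [Nonempty ι] (x : α) :
    ∑ s : ι → α, (∏ k, p (s k)) * empirical s x = p x := by
  have hind (i : ι) : ∑ s : ι → α, (∏ k, p (s k)) * (if s i = x then 1 else 0) = p x := by
    simpa using sum_prod_mul_apply hp1 i fun y => if y = x then (1 : ℝ) else 0
  simp_rw [empirical_eq_sum_indicator, mul_div_assoc', ← sum_div, mul_sum]
  rw [sum_comm, sum_congr rfl fun i _ => hind i, sum_const, card_univ, nsmul_eq_mul,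
    mul_div_cancel_left₀ _ (by positivity)]

lemma sum_prod_mul_empirical_sq [Nonempty ι] (x : α) :
    ∑ s : ι → α, (∏ k, p (s k)) * empirical s x ^ 2
      = (p x + (Fintype.card ι - 1) * p x ^ 2) / Fintype.card ι := by
  have hind (i j : ι) : ∑ s : ι → α, (∏ k, p (s k)) *
      ((if s i = x then 1 else 0) * (if s j = x then 1 else 0))
      = p x ^ 2 + if i = j then p x - p x ^ 2 else 0 := by
    rcases eq_or_ne i j with rfl | hij
    · simpa [← ite_and] using sum_prod_mul_apply hp1 i fun y => if y = x then (1 : ℝ) else 0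
    · simpa [hij, sq] using sum_prod_mul_apply_mul_apply hp1 hij
        (fun y => if y = x then (1 : ℝ) else 0) (fun y => if y = x then (1 : ℝ) else 0)
  calc ∑ s : ι → α, (∏ k, p (s k)) * empirical s x ^ 2
      = (∑ i, ∑ j, ∑ s : ι → α, (∏ k, p (s k)) *
          ((if s i = x then 1 else 0) * (if s j = x then 1 else 0))) / Fintype.card ι ^ 2 := by
        simp_rw [empirical_eq_sum_indicator, div_pow, sq (∑ i : ι, _), sum_mul_sum, mul_div_assoc',
          ← sum_div, mul_sum]
        rw [sum_comm]
        simp_rw [sum_comm (γ := ι → α)]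
    _ = _ := by
        simp_rw [hind, sum_add_distrib, sum_ite_eq]
        simp only [sum_const, card_univ, nsmul_eq_mul, mem_univ, ↓reduceIte]
        field_simp
        ring

variable [Nonempty ι]

lemma sum_prod_mul_entropy_empirical_sub_entropy :
    ∑ s : ι → α, (∏ k, p (s k)) * entropy (empirical s) - entropy p
      = -∑ s : ι → α, (∏ k, p (s k)) * relEntropy (empirical s) p := by
  have hcross (s : ι → α) : (∏ k, p (s k)) * (entropy (empirical s) + relEntropy (empirical s) p)
      = ∑ x, (∏ k, p (s k)) * empirical s x * -log (p x) := by
    rcases eq_or_ne (∏ k, p (s k)) 0 with hs | hs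
    · simp [hs]
    rw [entropy_add_relEntropy fun x => p_ne_zero_of_empirical_ne_zero hs, mul_neg, mul_sum,
      ← sum_neg_distrib]
    simp only [mul_assoc, mul_neg]
  have hsum : ∑ s : ι → α, (∏ k, p (s k)) * entropy (empirical s)
      + ∑ s : ι → α, (∏ k, p (s k)) * relEntropy (empirical s) p = entropy p := by
    rw [← sum_add_distrib]
    simp_rw [← mul_add, hcross]
    rw [sum_comm]
    simp_rw [← sum_mul, sum_prod_mul_empirical hp1, entropy, mul_neg, sum_neg_distrib]
  linarith

lemma sum_prod_mul_sum_empirical_sq_div_le :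
    ∑ s : ι → α, (∏ k, p (s k)) * ∑ x, empirical s x ^ 2 / p x
      ≤ 1 + (Fintype.card α - 1) / Fintype.card ι := by
  have hn : (0 : ℝ) < Fintype.card ι := by positivity
  have hterm (x : α) : (p x + (Fintype.card ι - 1) * p x ^ 2) / Fintype.card ι / p x
      ≤ (1 + (Fintype.card ι - 1) * p x) / Fintype.card ι := by
    rcases eq_or_ne (p x) 0 with hx | hx
    · simp [hx, hn.le] -- `_ / 0 = 0`: symbols outside the support of `p` contribute nothing
    · exact le_of_eq (by field_simp)
  calc ∑ s : ι → α, (∏ k, p (s k)) * ∑ x, empirical s x ^ 2 / p x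
      = ∑ x, (∑ s : ι → α, (∏ k, p (s k)) * empirical s x ^ 2) / p x := by
        simp_rw [mul_sum, sum_div, mul_div_assoc]
        exact sum_comm
    _ ≤ ∑ x, (1 + (Fintype.card ι - 1) * p x) / Fintype.card ι := by
        simp_rw [sum_prod_mul_empirical_sq hp1]
        exact sum_le_sum fun x _ => hterm x
    _ = 1 + (Fintype.card α - 1) / Fintype.card ι := by
        rw [← sum_div, sum_add_distrib, ← mul_sum, hp1]
        simp only [sum_const, card_univ, nsmul_eq_mul, mul_one]
        field_simp
        ring

variable (hp : ∀ x, 0 ≤ p x)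
include hp

lemma sum_prod_mul_relEntropy_empirical_nonneg :
    0 ≤ ∑ s : ι → α, (∏ k, p (s k)) * relEntropy (empirical s) p := by
  refine sum_nonneg fun s _ => ?_
  rcases eq_or_ne (∏ k, p (s k)) 0 with hs | hs
  · simp [hs]
  exact mul_nonneg (prod_nonneg fun k _ => hp _) <| relEntropy_nonneg (empirical_nonneg s)
    (sum_empirical s) hp hp1.le fun x hx => (hp x).lt_of_ne' (p_ne_zero_of_empirical_ne_zero hs hx)

lemma sum_prod_mul_relEntropy_empirical_le :
    ∑ s : ι → α, (∏ k, p (s k)) * relEntropy (empirical s) p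
      ≤ log (1 + (Fintype.card α - 1) / Fintype.card ι) := by
  have hw (s : ι → α) : 0 ≤ ∏ k, p (s k) := prod_nonneg fun k _ => hp _
  have hsupp {s : ι → α} (hs : ∏ k, p (s k) ≠ 0) (x : α) (hx : empirical s x ≠ 0) : 0 < p x :=
    (hp x).lt_of_ne' (p_ne_zero_of_empirical_ne_zero hs hx)
  have hpos {s : ι → α} (hs : ∏ k, p (s k) ≠ 0) : 0 < ∑ x, empirical s x ^ 2 / p x :=
    sum_sq_div_pos (empirical_nonneg s) (sum_empirical s) (hsupp hs)
  calc ∑ s : ι → α, (∏ k, p (s k)) * relEntropy (empirical s) p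
      ≤ ∑ s : ι → α, (∏ k, p (s k)) * log (∑ x, empirical s x ^ 2 / p x) := by
        refine sum_le_sum fun s _ => ?_
        rcases eq_or_ne (∏ k, p (s k)) 0 with hs | hs
        · simp [hs]
        exact mul_le_mul_of_nonneg_left (relEntropy_le_log_sum_sq_div (empirical_nonneg s)
          (sum_empirical s) (hsupp hs)) (hw s)
    _ ≤ log (∑ s : ι → α, (∏ k, p (s k)) * ∑ x, empirical s x ^ 2 / p x) :=
        sum_mul_log_le_log_sum_mul hw (sum_prod_eq_one hp1) fun s hs => hpos hs
    _ ≤ log (1 + (Fintype.card α - 1) / Fintype.card ι) :=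
        log_le_log (sum_mul_pos_of_sum_eq_one hw (sum_prod_eq_one hp1) fun s hs => hpos hs)
          (sum_prod_mul_sum_empirical_sq_div_le hp1)

end Empirical

/-- The plug-in entropy estimator from `n` i.i.d. samples is negatively
biased: `E[Ĥ] − H = −E[D(P̂‖P)] ≤ 0`, and moreover
`−log(1 + (|𝒳|−1)/n) ≤ E[Ĥ] − H ≤ 0`. Expectations are over the i.i.d. sample vector
`s : Fin n → Fin m` with weight `∏ i, p (s i)`; `emp s` is the empirical distribution. -/
theorem stmt18 (m n : ℕ) (hn : 1 ≤ n) (p : Fin m → ℝ)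
    (hp : ∀ x, 0 ≤ p x) (hpsum : ∑ x, p x = 1) :
    ∀ emp : (Fin n → Fin m) → Fin m → ℝ,
      (emp = fun s x => ((Finset.univ.filter (fun i => s i = x)).card : ℝ) / n) →
    ∀ pr : (Fin n → Fin m) → ℝ, (pr = fun s => ∏ i, p (s i)) →
    ∀ H : (Fin m → ℝ) → ℝ, (H = fun w => -∑ x, w x * Real.log (w x)) →
    ∀ D : (Fin m → ℝ) → (Fin m → ℝ) → ℝ,
      (D = fun a b => ∑ x, a x * Real.log (a x / b x)) →
    ((∑ s, pr s * H (emp s)) - H p = -(∑ s, pr s * D (emp s) p) ∧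
     -Real.log (1 + ((m : ℝ) - 1) / n) ≤ (∑ s, pr s * H (emp s)) - H p ∧
     (∑ s, pr s * H (emp s)) - H p ≤ 0) := by
  intro emp hemp pr hpr H hH D hD
  have : Nonempty (Fin n) := ⟨⟨0, hn⟩⟩
  obtain rfl : emp = empirical := by
    rw [hemp]; funext s x; simp [empirical]
  obtain rfl : H = entropy := hH
  obtain rfl : D = relEntropy := hD
  subst hpr
  have hbias := sum_prod_mul_entropy_empirical_sub_entropy (ι := Fin n) hpsum
  have hlower := sum_prod_mul_relEntropy_empirical_le (ι := Fin n) hpsum hp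
  have hupper := sum_prod_mul_relEntropy_empirical_nonneg (ι := Fin n) hpsum hp
  rw [Fintype.card_fin, Fintype.card_fin] at hlower
  exact ⟨hbias, by rw [hbias]; linarith, by rw [hbias]; linarith⟩
end
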